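/- arXiv:1105.1605 — 2 statements merged into one kernel-verified Lean document; each statement's English description precedes it below -/
import Mathlib

section
/- Let (X, d_X) and (Y, d_Y) be non-Archimedean metric spaces. For any maps f, g : X → Y, one has ρ_H(f, g) = ρ_b(f, g). In particular, if f or g is a Lipschitz map and min{dil f, dil g} ≥ 1, then ρ_s(f, g) ≤ min{dil f, dil g} · ρ_H(f, g). -/
open scoped ENNReal

/-- The graph of a map `f : X → Y`, as a subset of `X × Y`. -/
def graphOf {X Y : Type*} (f : X → Y) : Set (X × Y) :=
  Set.range fun x => (x, f x)

/-- `ρ_H(f,g)`: the Hausdorff distance between the graphs of `f` and `g` in the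
product `X × Y` equipped with the sup-metric (which is the product metric in Mathlib). -/
noncomputable def rhoH {X Y : Type*} [MetricSpace X] [MetricSpace Y] (f g : X → Y) : ℝ≥0∞ :=
  EMetric.hausdorffEdist (graphOf f) (graphOf g)

/-- `ρ_s(f,g) = sup_x d_Y(f x, g x)`. -/
noncomputable def rhoS {X Y : Type*} [MetricSpace X] [MetricSpace Y] (f g : X → Y) : ℝ≥0∞ :=
  ⨆ x : X, edist (f x) (g x)

/-- `ρ_b(f,g)`: the infimum of those `ε > 0` such that for every `x ∈ X` there exist
`x', x'' ∈ B_x(ε)` with `d_Y(f x, g x') < ε` and `d_Y(g x, f x'') < ε`. -/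
noncomputable def rhoB {X Y : Type*} [MetricSpace X] [MetricSpace Y] (f g : X → Y) : ℝ≥0∞ :=
  sInf {ε : ℝ≥0∞ | 0 < ε ∧ ∀ x : X,
    (∃ x' : X, edist x x' < ε ∧ edist (f x) (g x') < ε) ∧
    (∃ x'' : X, edist x x'' < ε ∧ edist (g x) (f x'') < ε)}

/-- The dilatation `dil f = sup_{x₁ ≠ x₂} d_Y(f x₁, f x₂) / d_X(x₁, x₂)`
(equal to `∞` when `f` is not Lipschitz). -/
noncomputable def dil {X Y : Type*} [MetricSpace X] [MetricSpace Y] (f : X → Y) : ℝ≥0∞ :=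
  ⨆ (x₁ : X) (x₂ : X) (_ : x₁ ≠ x₂), edist (f x₁) (f x₂) / edist x₁ x₂

/-!
A point of `Γ_f` lies within `ε` of `Γ_g` exactly when some `x'` has `d(x, x') < ε` and
`d(f x, g x') < ε`, so `ρ_H` and `ρ_b` are the infimum of the same set of radii.
For the estimate, take `ε > ρ_H` and `x'` with `d(x, x') < ε` and `d(g x, f x') < ε`; the strong
triangle inequality through `f x'` gives `d(f x, g x) ≤ max (dil f · ε, ε) = dil f · ε` when
`dil f ≥ 1`, and symmetrically with `dil g`. The Lipschitz hypothesis keeps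
`min (dil f) (dil g)` finite, so the bound survives the limit `ε ↓ ρ_H`.
-/

open Metric

lemma IsUltrametricDist.edist_triangle_max {Y : Type*} [PseudoMetricSpace Y]
    [IsUltrametricDist Y] (a b c : Y) : edist a c ≤ max (edist a b) (edist b c) := by
  simp only [edist_dist, ← ENNReal.ofReal_max]
  exact ENNReal.ofReal_le_ofReal (dist_triangle_max a b c)

section

variable {X Y : Type*} [MetricSpace X] [MetricSpace Y]

lemma edist_le_dil_mul (f : X → Y) (a b : X) : edist (f a) (f b) ≤ dil f * edist a b := by
  rcases eq_or_ne a b with rfl | hab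
  · simp
  · have h : edist (f a) (f b) / edist a b ≤ dil f :=
      le_iSup_of_le a (le_iSup_of_le b (le_iSup_of_le hab le_rfl))
    rwa [ENNReal.div_le_iff (edist_pos.mpr hab).ne' (edist_ne_top a b)] at h

lemma dil_ne_top_of_lipschitzWith {f : X → Y} {c : NNReal} (hf : LipschitzWith c f) :
    dil f ≠ ∞ :=
  ne_top_of_le_ne_top ENNReal.coe_ne_top <|
    iSup_le fun a => iSup_le fun b => iSup_le fun _ => ENNReal.div_le_of_le_mul (hf a b)

lemma rhoH_comm (f g : X → Y) : rhoH f g = rhoH g f :=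
  hausdorffEDist_comm

lemma exists_edist_lt_of_rhoH_lt {f g : X → Y} {ε : ℝ≥0∞} (hε : rhoH f g < ε) (x : X) :
    ∃ x', edist x x' < ε ∧ edist (f x) (g x') < ε := by
  have h : infEDist (x, f x) (graphOf g) < ε :=
    (infEDist_le_hausdorffEDist_of_mem (s := graphOf f) ⟨x, rfl⟩).trans_lt hε
  obtain ⟨_, ⟨x', rfl⟩, hd⟩ := infEDist_lt_iff.mp h
  exact ⟨x', max_lt_iff.mp hd⟩

lemma rhoH_le_of_forall_exists_edist_lt {f g : X → Y} {ε : ℝ≥0∞}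
    (hfg : ∀ x, ∃ x', edist x x' < ε ∧ edist (f x) (g x') < ε)
    (hgf : ∀ x, ∃ x', edist x x' < ε ∧ edist (g x) (f x') < ε) : rhoH f g ≤ ε := by
  refine hausdorffEDist_le_of_mem_edist ?_ ?_ <;> rintro _ ⟨x, rfl⟩
  · obtain ⟨x', hx, hy⟩ := hfg x
    exact ⟨_, ⟨x', rfl⟩, (max_lt hx hy).le⟩
  · obtain ⟨x', hx, hy⟩ := hgf x
    exact ⟨_, ⟨x', rfl⟩, (max_lt hx hy).le⟩

theorem rhoH_eq_rhoB (f g : X → Y) : rhoH f g = rhoB f g := by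
  refine le_antisymm (le_sInf ?_) (le_of_forall_gt_imp_ge_of_dense fun ε hε => sInf_le ?_)
  · rintro ε ⟨-, hε⟩
    exact rhoH_le_of_forall_exists_edist_lt (fun x => (hε x).1) (fun x => (hε x).2)
  · exact ⟨zero_le.trans_lt hε, fun x => ⟨exists_edist_lt_of_rhoH_lt hε x,
      exists_edist_lt_of_rhoH_lt (rhoH_comm f g ▸ hε) x⟩⟩

variable [IsUltrametricDist Y]

lemma edist_apply_le_dil_mul_of_rhoH_lt {f g : X → Y} (hf : 1 ≤ dil f) {ε : ℝ≥0∞}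
    (hε : rhoH f g < ε) (x : X) : edist (f x) (g x) ≤ dil f * ε := by
  obtain ⟨x', hx, hgf⟩ := exists_edist_lt_of_rhoH_lt (rhoH_comm f g ▸ hε) x
  calc edist (f x) (g x) ≤ max (edist (f x) (f x')) (edist (f x') (g x)) :=
        IsUltrametricDist.edist_triangle_max _ _ _
    _ ≤ dil f * ε := max_le ((edist_le_dil_mul f x x').trans (mul_le_mul_right hx.le _))
        ((edist_comm (f x') (g x) ▸ hgf.le).trans (le_mul_of_one_le_left zero_le hf))

lemma rhoS_le_min_dil_mul_of_rhoH_lt {f g : X → Y} (h : 1 ≤ min (dil f) (dil g))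
    {ε : ℝ≥0∞} (hε : rhoH f g < ε) : rhoS f g ≤ min (dil f) (dil g) * ε := by
  refine iSup_le fun x => ?_
  rw [← min_mul_mul_right]
  exact le_min (edist_apply_le_dil_mul_of_rhoH_lt (le_min_iff.mp h).1 hε x)
    (edist_comm (f x) (g x) ▸
      edist_apply_le_dil_mul_of_rhoH_lt (le_min_iff.mp h).2 (rhoH_comm f g ▸ hε) x)

theorem rhoS_le_min_dil_mul_rhoH {f g : X → Y}
    (hlip : (∃ c : NNReal, LipschitzWith c f) ∨ (∃ c : NNReal, LipschitzWith c g))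
    (h : 1 ≤ min (dil f) (dil g)) : rhoS f g ≤ min (dil f) (dil g) * rhoH f g := by
  have hm_top : min (dil f) (dil g) ≠ ∞ := by
    rcases hlip with ⟨c, hc⟩ | ⟨c, hc⟩
    · exact ne_top_of_le_ne_top (dil_ne_top_of_lipschitzWith hc) (min_le_left _ _)
    · exact ne_top_of_le_ne_top (dil_ne_top_of_lipschitzWith hc) (min_le_right _ _)
  refine ENNReal.le_mul_of_forall_lt (.inl (one_pos.trans_le h).ne') (.inl hm_top)
    fun m hm ε hε => ?_
  exact (rhoS_le_min_dil_mul_of_rhoH_lt h hε).trans (mul_le_mul_left hm.le _)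

end

theorem stmt_14_general {X Y : Type*} [MetricSpace X] [MetricSpace Y]
    (hnaY : ∀ x y z : Y, dist x z ≤ max (dist x y) (dist y z))
    (f g : X → Y) :
    rhoH f g = rhoB f g ∧
    (((∃ c : NNReal, LipschitzWith c f) ∨ (∃ c : NNReal, LipschitzWith c g)) →
      1 ≤ min (dil f) (dil g) →
      rhoS f g ≤ min (dil f) (dil g) * rhoH f g) := by
  have : IsUltrametricDist Y := ⟨hnaY⟩
  exact ⟨rhoH_eq_rhoB f g, rhoS_le_min_dil_mul_rhoH⟩

theorem stmt_14 {X Y : Type*} [MetricSpace X] [MetricSpace Y]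
    (hnaX : ∀ x y z : X, dist x z ≤ max (dist x y) (dist y z))
    (hnaY : ∀ x y z : Y, dist x z ≤ max (dist x y) (dist y z))
    (f g : X → Y) :
    rhoH f g = rhoB f g ∧
    (((∃ c : NNReal, LipschitzWith c f) ∨ (∃ c : NNReal, LipschitzWith c g)) →
      1 ≤ min (dil f) (dil g) →
      rhoS f g ≤ min (dil f) (dil g) * rhoH f g) :=
  stmt_14_general hnaY f g
end

section
/- Let (X, d_X) and (Y, d_Y) be non-Archimedean metric spaces such that every ball in X contains at least two distinct points. Then for every λ > 0, the functions β^λ_{X,Y} and β^{*λ}_{X,Y} are non-Archimedean metrics on D♭(X, Y) = {maps P : M♭(X) → Y}: each is nonnegative, vanishes exactly on the diagonal, is symmetric, and satisfies the strong triangle inequality β(P₁, P₃) ≤ max{β(P₁, P₂), β(P₂, P₃)}. -/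
open scoped ENNReal

/-- A ball in a metric space: an open or closed ball of positive radius. -/
def IsBall {X : Type*} [MetricSpace X] (B : Set X) : Prop :=
  ∃ (a : X) (r : ℝ), 0 < r ∧ (B = Metric.ball a r ∨ B = Metric.closedBall a r)

/-- The type `M♭(X)` of all balls of `X`. -/
abbrev BallSet (X : Type*) [MetricSpace X] := {B : Set X // IsBall B}

-- `β^λ_{X,Y}(P₁,P₂)`: zero if `P₁ = P₂`; otherwise the infimum of those `ε > 0` such that
-- `d_Y(P₁(B), P₂(B^{λε})) ≤ ε` and `d_Y(P₂(B), P₁(B^{λε})) ≤ ε` for every ball `B`, where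
-- `B^{δ}` denotes the `δ`-neighborhood (thickening) of `B`, which is again a ball.
open Classical in
noncomputable def betaL {X Y : Type*} [MetricSpace X] [MetricSpace Y]
    (lam : ℝ) (P₁ P₂ : BallSet X → Y) : ℝ≥0∞ :=
  if P₁ = P₂ then 0 else
    sInf {e : ℝ≥0∞ | ∃ ε : ℝ, 0 < ε ∧ e = ENNReal.ofReal ε ∧
      ∀ B : BallSet X, ∃ B' : BallSet X,
        (B' : Set X) = Metric.thickening (lam * ε) (B : Set X) ∧
        edist (P₁ B) (P₂ B') ≤ ENNReal.ofReal ε ∧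
        edist (P₂ B) (P₁ B') ≤ ENNReal.ofReal ε}

/-- `β^{*λ}_{X,Y}(P₁,P₂)`: the infimum of those `ε > 0` such that for every ball `B` there
exist positive `ε_B, ε'_B ≤ ε` with `d_Y(P₁(B), P₂(B^{λε_B})) ≤ ε` and
`d_Y(P₂(B), P₁(B^{λε'_B})) ≤ ε`. -/
noncomputable def betaStarL {X Y : Type*} [MetricSpace X] [MetricSpace Y]
    (lam : ℝ) (P₁ P₂ : BallSet X → Y) : ℝ≥0∞ :=
  sInf {e : ℝ≥0∞ | ∃ ε : ℝ, 0 < ε ∧ e = ENNReal.ofReal ε ∧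
    ∀ B : BallSet X, ∃ εB εB' : ℝ, 0 < εB ∧ εB ≤ ε ∧ 0 < εB' ∧ εB' ≤ ε ∧
      ∃ B' B'' : BallSet X,
        (B' : Set X) = Metric.thickening (lam * εB) (B : Set X) ∧
        (B'' : Set X) = Metric.thickening (lam * εB') (B : Set X) ∧
        edist (P₁ B) (P₂ B') ≤ ENNReal.ofReal ε ∧
        edist (P₂ B) (P₁ B'') ≤ ENNReal.ofReal ε}

/-- `ρ_s(P₁,P₂) = sup_{B ∈ M♭(X)} d_Y(P₁(B), P₂(B))`. -/
noncomputable def rhoSB {X Y : Type*} [MetricSpace X] [MetricSpace Y]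
    (P₁ P₂ : BallSet X → Y) : ℝ≥0∞ :=
  ⨆ B : BallSet X, edist (P₁ B) (P₂ B)

/-- `ρ_H(P₁,P₂)`: the Hausdorff distance between the graphs of `P₁` and `P₂` inside
`W = M♭(X) × Y` with the sup-metric `max (d_{X,H}, d_Y)`, written out via the
`sup-inf` formula for the Hausdorff distance. -/
noncomputable def rhoHB {X Y : Type*} [MetricSpace X] [MetricSpace Y]
    (P₁ P₂ : BallSet X → Y) : ℝ≥0∞ :=
  max
    (⨆ B : BallSet X, ⨅ B' : BallSet X,
      max (EMetric.hausdorffEdist (B : Set X) (B' : Set X)) (edist (P₁ B) (P₂ B')))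
    (⨆ B : BallSet X, ⨅ B' : BallSet X,
      max (EMetric.hausdorffEdist (B : Set X) (B' : Set X)) (edist (P₂ B) (P₁ B')))

/-- Membership in `D♭^{(1)}(X,Y)`: `d_Y(P(B), P(B^ε)) ≤ ε` for all `ε > 0` and all balls `B`. -/
def memDflatOne {X Y : Type*} [MetricSpace X] [MetricSpace Y] (P : BallSet X → Y) : Prop :=
  ∀ ε : ℝ, 0 < ε → ∀ B B' : BallSet X,
    (B' : Set X) = Metric.thickening ε (B : Set X) → edist (P B) (P B') ≤ ENNReal.ofReal ε

/-!
In an ultrametric space, thickening a set by `δ` and then by `δ'` is the same as thickening it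
by `max δ δ'`, and a ball is left unchanged by thickenings smaller than its radius. The first
fact lets witnesses of `β(P₁, P₂) ≤ ε₁` and `β(P₂, P₃) ≤ ε₂` be composed into a witness of
`β(P₁, P₃) ≤ max ε₁ ε₂` (the ultrametric inequality in `Y` handles the values). The second makes
`P` `ε`-close to itself for every `ε` in the sense of `β*`, and shows that if `P₁ B ≠ P₂ B`
then every admissible `ε` is at least `min (r / λ) (d(P₁ B, P₂ B))`, `r` a radius of `B`.
-/

open Metric

section Ultrametric

variable {X : Type*} [PseudoMetricSpace X] [IsUltrametricDist X]

lemma edist_triangle_max (x y z : X) : edist x z ≤ max (edist x y) (edist y z) := by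
  simp only [edist_dist, ← ENNReal.ofReal_max]
  exact ENNReal.ofReal_le_ofReal (dist_triangle_max x y z)

lemma edist_le_ofReal_max {x y z : X} {a b : ℝ} (hxy : edist x y ≤ ENNReal.ofReal a)
    (hyz : edist y z ≤ ENNReal.ofReal b) : edist x z ≤ ENNReal.ofReal (max a b) :=
  (edist_triangle_max x y z).trans (ENNReal.ofReal_max a b ▸ max_le_max hxy hyz)

lemma thickening_thickening_eq_max {δ δ' : ℝ} (hδ : 0 < δ) (hδ' : 0 < δ') (s : Set X) :
    thickening δ' (thickening δ s) = thickening (max δ δ') s := by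
  ext x
  simp only [mem_thickening_iff]
  constructor
  · rintro ⟨y, ⟨z, hz, hyz⟩, hxy⟩
    exact ⟨z, hz, (dist_triangle_max x y z).trans_lt (max_comm δ δ' ▸ max_lt_max hxy hyz)⟩
  · rintro ⟨z, hz, hxz⟩
    by_cases hxzδ : dist x z < δ
    · exact ⟨x, ⟨z, hz, hxzδ⟩, by simpa using hδ'⟩
    · exact ⟨z, ⟨z, hz, by simpa using hδ⟩, (lt_max_iff.mp hxz).resolve_left hxzδ⟩

lemma thickening_ball_of_le {a : X} {r δ : ℝ} (hδ : 0 < δ) (hδr : δ ≤ r) :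
    thickening δ (ball a r) = ball a r := by
  refine (Set.Subset.antisymm_iff.mpr ⟨fun x hx => ?_, self_subset_thickening hδ _⟩)
  obtain ⟨z, hz, hxz⟩ := mem_thickening_iff.mp hx
  exact (dist_triangle_max x z a).trans_lt (max_lt (hxz.trans_le hδr) hz)

lemma thickening_closedBall_of_le {a : X} {r δ : ℝ} (hδ : 0 < δ) (hδr : δ ≤ r) :
    thickening δ (closedBall a r) = closedBall a r := by
  refine (Set.Subset.antisymm_iff.mpr ⟨fun x hx => ?_, self_subset_thickening hδ _⟩)
  obtain ⟨z, hz, hxz⟩ := mem_thickening_iff.mp hx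
  exact (dist_triangle_max x z a).trans (max_le (hxz.le.trans hδr) hz)

end Ultrametric

lemma IsBall.exists_pos_forall_thickening_eq {X : Type*} [MetricSpace X] [IsUltrametricDist X]
    {B : Set X} (hB : IsBall B) :
    ∃ r : ℝ, 0 < r ∧ ∀ δ : ℝ, 0 < δ → δ ≤ r → thickening δ B = B := by
  obtain ⟨a, r, hr, rfl | rfl⟩ := hB
  · exact ⟨r, hr, fun δ hδ hδr => thickening_ball_of_le hδ hδr⟩
  · exact ⟨r, hr, fun δ hδ hδr => thickening_closedBall_of_le hδ hδr⟩

noncomputable def infPos (C : ℝ → Prop) : ℝ≥0∞ :=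
  sInf {e : ℝ≥0∞ | ∃ ε : ℝ, 0 < ε ∧ e = ENNReal.ofReal ε ∧ C ε}

section InfPos

variable {C C₁ C₂ C₃ : ℝ → Prop}

lemma infPos_eq_zero (h : ∀ ε, 0 < ε → C ε) : infPos C = 0 := by
  refine nonpos_iff_eq_zero.mp (ENNReal.le_of_forall_pos_le_add fun ε hε _ => ?_)
  rw [zero_add, ← ENNReal.ofReal_coe_nnreal]
  exact sInf_le ⟨ε, NNReal.coe_pos.mpr hε, rfl, h ε (NNReal.coe_pos.mpr hε)⟩

lemma infPos_ne_zero {c : ℝ≥0∞} (hc : 0 < c) (h : ∀ ε, 0 < ε → C ε → c ≤ ENNReal.ofReal ε) :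
    infPos C ≠ 0 := by
  refine (hc.trans_le (le_sInf ?_)).ne'
  rintro _ ⟨ε, hε, rfl, hCε⟩
  exact h ε hε hCε

lemma infPos_le_max (h : ∀ ε₁ ε₂, 0 < ε₁ → 0 < ε₂ → C₁ ε₁ → C₂ ε₂ → C₃ (max ε₁ ε₂)) :
    infPos C₃ ≤ max (infPos C₁) (infPos C₂) := by
  refine le_of_forall_gt_imp_ge_of_dense fun c hc => ?_
  obtain ⟨_, ⟨ε₁, hε₁, rfl, hC₁⟩, hlt₁⟩ := sInf_lt_iff.mp ((le_max_left _ _).trans_lt hc)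
  obtain ⟨_, ⟨ε₂, hε₂, rfl, hC₂⟩, hlt₂⟩ := sInf_lt_iff.mp ((le_max_right _ _).trans_lt hc)
  calc infPos C₃ ≤ ENNReal.ofReal (max ε₁ ε₂) :=
        sInf_le ⟨_, lt_max_of_lt_left hε₁, rfl, h ε₁ ε₂ hε₁ hε₂ hC₁ hC₂⟩
    _ ≤ c := ENNReal.ofReal_max ε₁ ε₂ ▸ (max_lt hlt₁ hlt₂).le

end InfPos

section Beta

variable {X Y : Type*} [MetricSpace X] [MetricSpace Y] {lam ε : ℝ} {P₁ P₂ P₃ : BallSet X → Y}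

def IsBetaBound (lam ε : ℝ) (P₁ P₂ : BallSet X → Y) : Prop :=
  ∀ B : BallSet X, ∃ B' : BallSet X,
    (B' : Set X) = thickening (lam * ε) (B : Set X) ∧
    edist (P₁ B) (P₂ B') ≤ ENNReal.ofReal ε ∧
    edist (P₂ B) (P₁ B') ≤ ENNReal.ofReal ε

def IsBetaStarBound (lam ε : ℝ) (P₁ P₂ : BallSet X → Y) : Prop :=
  ∀ B : BallSet X, ∃ εB εB' : ℝ, 0 < εB ∧ εB ≤ ε ∧ 0 < εB' ∧ εB' ≤ ε ∧
    ∃ B' B'' : BallSet X,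
      (B' : Set X) = thickening (lam * εB) (B : Set X) ∧
      (B'' : Set X) = thickening (lam * εB') (B : Set X) ∧
      edist (P₁ B) (P₂ B') ≤ ENNReal.ofReal ε ∧
      edist (P₂ B) (P₁ B'') ≤ ENNReal.ofReal ε

lemma betaL_self (lam : ℝ) (P : BallSet X → Y) : betaL lam P P = 0 := if_pos rfl

lemma betaL_of_ne (h : P₁ ≠ P₂) : betaL lam P₁ P₂ = infPos (IsBetaBound lam · P₁ P₂) :=
  if_neg h

lemma betaStarL_eq_infPos : betaStarL lam P₁ P₂ = infPos (IsBetaStarBound lam · P₁ P₂) := rfl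

lemma IsBetaBound.symm (h : IsBetaBound lam ε P₁ P₂) : IsBetaBound lam ε P₂ P₁ := fun B => by
  obtain ⟨B', hB', h₁₂, h₂₁⟩ := h B
  exact ⟨B', hB', h₂₁, h₁₂⟩

lemma IsBetaStarBound.symm (h : IsBetaStarBound lam ε P₁ P₂) : IsBetaStarBound lam ε P₂ P₁ :=
  fun B => by
  obtain ⟨εB, εB', hεB, hεBε, hεB', hεB'ε, B', B'', hB', hB'', h₁₂, h₂₁⟩ := h B
  exact ⟨εB', εB, hεB', hεB'ε, hεB, hεBε, B'', B', hB'', hB', h₂₁, h₁₂⟩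

lemma IsBetaBound.isBetaStarBound (hε : 0 < ε) (h : IsBetaBound lam ε P₁ P₂) :
    IsBetaStarBound lam ε P₁ P₂ := fun B => by
  obtain ⟨B', hB', h₁₂, h₂₁⟩ := h B
  exact ⟨ε, ε, hε, le_rfl, hε, le_rfl, B', B', hB', hB', h₁₂, h₂₁⟩

lemma betaL_comm (lam : ℝ) (P₁ P₂ : BallSet X → Y) : betaL lam P₁ P₂ = betaL lam P₂ P₁ := by
  rcases eq_or_ne P₁ P₂ with rfl | h
  · rfl
  · rw [betaL_of_ne h, betaL_of_ne h.symm]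
    congr 1
    funext ε
    exact propext ⟨IsBetaBound.symm, IsBetaBound.symm⟩

lemma betaStarL_comm (lam : ℝ) (P₁ P₂ : BallSet X → Y) :
    betaStarL lam P₁ P₂ = betaStarL lam P₂ P₁ := by
  rw [betaStarL_eq_infPos, betaStarL_eq_infPos]
  congr 1
  funext ε
  exact propext ⟨IsBetaStarBound.symm, IsBetaStarBound.symm⟩

variable [IsUltrametricDist X]

lemma thickening_mul_thickening_mul (hlam : 0 < lam) {ε₁ ε₂ : ℝ} (hε₁ : 0 < ε₁) (hε₂ : 0 < ε₂)
    (s : Set X) :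
    thickening (lam * ε₂) (thickening (lam * ε₁) s) = thickening (lam * max ε₁ ε₂) s := by
  rw [thickening_thickening_eq_max (mul_pos hlam hε₁) (mul_pos hlam hε₂),
    mul_max_of_nonneg _ _ hlam.le]

lemma isBetaStarBound_self (hlam : 0 < lam) (hε : 0 < ε) (P : BallSet X → Y) :
    IsBetaStarBound lam ε P P := by
  intro B
  obtain ⟨r, hr, hthick⟩ := IsBall.exists_pos_forall_thickening_eq B.2
  set εB := min ε (r / lam)
  have hεB : 0 < εB := lt_min hε (div_pos hr hlam)
  have hBB : thickening (lam * εB) (B : Set X) = B :=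
    hthick _ (mul_pos hlam hεB) ((le_div_iff₀' hlam).mp (min_le_right _ _))
  exact ⟨εB, εB, hεB, min_le_left _ _, hεB, min_le_left _ _, B, B, hBB.symm, hBB.symm,
    by simp, by simp⟩

lemma exists_pos_forall_isBetaStarBound_le (hlam : 0 < lam) (h : P₁ ≠ P₂) :
    ∃ c : ℝ≥0∞, 0 < c ∧ ∀ ε, 0 < ε → IsBetaStarBound lam ε P₁ P₂ → c ≤ ENNReal.ofReal ε := by
  obtain ⟨B, hB⟩ := Function.ne_iff.mp h
  obtain ⟨r, hr, hthick⟩ := IsBall.exists_pos_forall_thickening_eq B.2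
  refine ⟨min (ENNReal.ofReal (r / lam)) (edist (P₁ B) (P₂ B)),
    lt_min (ENNReal.ofReal_pos.mpr (div_pos hr hlam)) (edist_pos.mpr hB), fun ε hε hbound => ?_⟩
  by_cases hεr : lam * ε ≤ r
  · obtain ⟨εB, _, hεB, hεBε, _, _, B', _, hB', _, h₁₂, _⟩ := hbound B
    have hB'B : B' = B := Subtype.ext <| hB'.trans <|
      hthick _ (mul_pos hlam hεB) ((mul_le_mul_of_nonneg_left hεBε hlam.le).trans hεr)
    exact (min_le_right _ _).trans (hB'B ▸ h₁₂)
  · exact (min_le_left _ _).trans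
      (ENNReal.ofReal_le_ofReal ((div_le_iff₀' hlam).mpr (not_le.mp hεr).le))

variable [IsUltrametricDist Y]

lemma IsBetaBound.trans (hlam : 0 < lam) {ε₁ ε₂ : ℝ} (hε₁ : 0 < ε₁) (hε₂ : 0 < ε₂)
    (h₁₂ : IsBetaBound lam ε₁ P₁ P₂) (h₂₃ : IsBetaBound lam ε₂ P₂ P₃) :
    IsBetaBound lam (max ε₁ ε₂) P₁ P₃ := by
  intro B
  obtain ⟨B₁, hB₁, h₁, -⟩ := h₁₂ B
  obtain ⟨B₂, hB₂, h₂, -⟩ := h₂₃ B₁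
  obtain ⟨C₁, hC₁, -, h₃⟩ := h₂₃ B
  obtain ⟨C₂, hC₂, -, h₄⟩ := h₁₂ C₁
  have hB₂B : (B₂ : Set X) = thickening (lam * max ε₁ ε₂) (B : Set X) := by
    rw [hB₂, hB₁, thickening_mul_thickening_mul hlam hε₁ hε₂]
  have hC₂B₂ : C₂ = B₂ := Subtype.ext <| by
    rw [hC₂, hC₁, thickening_mul_thickening_mul hlam hε₂ hε₁, hB₂B, max_comm]
  exact ⟨B₂, hB₂B, edist_le_ofReal_max h₁ h₂,
    max_comm ε₁ ε₂ ▸ edist_le_ofReal_max h₃ (hC₂B₂ ▸ h₄)⟩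

lemma IsBetaStarBound.trans (hlam : 0 < lam) {ε₁ ε₂ : ℝ}
    (h₁₂ : IsBetaStarBound lam ε₁ P₁ P₂) (h₂₃ : IsBetaStarBound lam ε₂ P₂ P₃) :
    IsBetaStarBound lam (max ε₁ ε₂) P₁ P₃ := by
  intro B
  obtain ⟨δ₁, -, hδ₁, hδ₁ε, -, -, B₁, -, hB₁, -, h₁, -⟩ := h₁₂ B
  obtain ⟨δ₂, -, hδ₂, hδ₂ε, -, -, B₂, -, hB₂, -, h₂, -⟩ := h₂₃ B₁
  obtain ⟨-, η₁, -, -, hη₁, hη₁ε, -, C₁, -, hC₁, -, h₃⟩ := h₂₃ B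
  obtain ⟨-, η₂, -, -, hη₂, hη₂ε, -, C₂, -, hC₂, -, h₄⟩ := h₁₂ C₁
  refine ⟨max δ₁ δ₂, max η₁ η₂, lt_max_of_lt_left hδ₁, max_le_max hδ₁ε hδ₂ε,
    lt_max_of_lt_left hη₁, max_comm ε₁ ε₂ ▸ max_le_max hη₁ε hη₂ε, B₂, C₂, ?_, ?_,
    edist_le_ofReal_max h₁ h₂, max_comm ε₁ ε₂ ▸ edist_le_ofReal_max h₃ h₄⟩
  · rw [hB₂, hB₁, thickening_mul_thickening_mul hlam hδ₁ hδ₂]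
  · rw [hC₂, hC₁, thickening_mul_thickening_mul hlam hη₁ hη₂]

end Beta

section BetaMetric

variable {X Y : Type*} [MetricSpace X] [MetricSpace Y] [IsUltrametricDist X] {lam : ℝ}

lemma betaL_eq_zero_iff (hlam : 0 < lam) {P₁ P₂ : BallSet X → Y} :
    betaL lam P₁ P₂ = 0 ↔ P₁ = P₂ := by
  refine ⟨not_imp_not.mp fun h => ?_, fun h => h ▸ betaL_self lam P₁⟩
  obtain ⟨c, hc, hle⟩ := exists_pos_forall_isBetaStarBound_le hlam h
  rw [betaL_of_ne h]
  exact infPos_ne_zero hc fun ε hε hbound => hle ε hε (hbound.isBetaStarBound hε)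

lemma betaStarL_eq_zero_iff (hlam : 0 < lam) {P₁ P₂ : BallSet X → Y} :
    betaStarL lam P₁ P₂ = 0 ↔ P₁ = P₂ := by
  refine ⟨not_imp_not.mp fun h => ?_, fun h => h ▸ infPos_eq_zero fun ε hε => ?_⟩
  · obtain ⟨c, hc, hle⟩ := exists_pos_forall_isBetaStarBound_le hlam h
    exact infPos_ne_zero hc hle
  · exact isBetaStarBound_self hlam hε P₁

variable [IsUltrametricDist Y]

lemma betaL_le_max (hlam : 0 < lam) (P₁ P₂ P₃ : BallSet X → Y) :
    betaL lam P₁ P₃ ≤ max (betaL lam P₁ P₂) (betaL lam P₂ P₃) := by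
  rcases eq_or_ne P₁ P₃ with rfl | h₁₃
  · exact (betaL_self lam P₁).trans_le zero_le
  rcases eq_or_ne P₁ P₂ with rfl | h₁₂
  · exact le_max_right _ _
  rcases eq_or_ne P₂ P₃ with rfl | h₂₃
  · exact le_max_left _ _
  rw [betaL_of_ne h₁₃, betaL_of_ne h₁₂, betaL_of_ne h₂₃]
  exact infPos_le_max fun _ _ hε₁ hε₂ h₁ h₂ => IsBetaBound.trans hlam hε₁ hε₂ h₁ h₂

lemma betaStarL_le_max (hlam : 0 < lam) (P₁ P₂ P₃ : BallSet X → Y) :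
    betaStarL lam P₁ P₃ ≤ max (betaStarL lam P₁ P₂) (betaStarL lam P₂ P₃) :=
  infPos_le_max fun _ _ _ _ h₁ h₂ => IsBetaStarBound.trans hlam h₁ h₂

end BetaMetric

theorem stmt_15_general {X Y : Type*} [MetricSpace X] [MetricSpace Y]
    (hnaX : ∀ x y z : X, dist x z ≤ max (dist x y) (dist y z))
    (hnaY : ∀ x y z : Y, dist x z ≤ max (dist x y) (dist y z))
    (lam : ℝ) (hlam : 0 < lam) :
    ((∀ P₁ P₂ : BallSet X → Y, 0 ≤ betaL lam P₁ P₂) ∧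
     (∀ P₁ P₂ : BallSet X → Y, (betaL lam P₁ P₂ = 0 ↔ P₁ = P₂)) ∧
     (∀ P₁ P₂ : BallSet X → Y, betaL lam P₁ P₂ = betaL lam P₂ P₁) ∧
     (∀ P₁ P₂ P₃ : BallSet X → Y,
       betaL lam P₁ P₃ ≤ max (betaL lam P₁ P₂) (betaL lam P₂ P₃))) ∧
    ((∀ P₁ P₂ : BallSet X → Y, 0 ≤ betaStarL lam P₁ P₂) ∧
     (∀ P₁ P₂ : BallSet X → Y, (betaStarL lam P₁ P₂ = 0 ↔ P₁ = P₂)) ∧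
     (∀ P₁ P₂ : BallSet X → Y, betaStarL lam P₁ P₂ = betaStarL lam P₂ P₁) ∧
     (∀ P₁ P₂ P₃ : BallSet X → Y,
       betaStarL lam P₁ P₃ ≤ max (betaStarL lam P₁ P₂) (betaStarL lam P₂ P₃))) := by
  have : IsUltrametricDist X := ⟨hnaX⟩
  have : IsUltrametricDist Y := ⟨hnaY⟩
  exact ⟨⟨fun _ _ => zero_le, fun _ _ => betaL_eq_zero_iff hlam, betaL_comm lam,
      betaL_le_max hlam⟩,
    ⟨fun _ _ => zero_le, fun _ _ => betaStarL_eq_zero_iff hlam, betaStarL_comm lam,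
      betaStarL_le_max hlam⟩⟩

theorem stmt_15 {X Y : Type*} [MetricSpace X] [MetricSpace Y]
    (hnaX : ∀ x y z : X, dist x z ≤ max (dist x y) (dist y z))
    (hnaY : ∀ x y z : Y, dist x z ≤ max (dist x y) (dist y z))
    (hball : ∀ B : Set X, IsBall B → ∃ x ∈ B, ∃ y ∈ B, x ≠ y)
    (lam : ℝ) (hlam : 0 < lam) :
    ((∀ P₁ P₂ : BallSet X → Y, 0 ≤ betaL lam P₁ P₂) ∧
     (∀ P₁ P₂ : BallSet X → Y, (betaL lam P₁ P₂ = 0 ↔ P₁ = P₂)) ∧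
     (∀ P₁ P₂ : BallSet X → Y, betaL lam P₁ P₂ = betaL lam P₂ P₁) ∧
     (∀ P₁ P₂ P₃ : BallSet X → Y,
       betaL lam P₁ P₃ ≤ max (betaL lam P₁ P₂) (betaL lam P₂ P₃))) ∧
    ((∀ P₁ P₂ : BallSet X → Y, 0 ≤ betaStarL lam P₁ P₂) ∧
     (∀ P₁ P₂ : BallSet X → Y, (betaStarL lam P₁ P₂ = 0 ↔ P₁ = P₂)) ∧
     (∀ P₁ P₂ : BallSet X → Y, betaStarL lam P₁ P₂ = betaStarL lam P₂ P₁) ∧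
     (∀ P₁ P₂ P₃ : BallSet X → Y,
       betaStarL lam P₁ P₃ ≤ max (betaStarL lam P₁ P₂) (betaStarL lam P₂ P₃))) :=
  stmt_15_general hnaX hnaY lam hlam
end
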